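/- For every k ∈ ℕ, MTL_{k+1} is strictly more expressive than MTL_k: the formula φ[k+1], defined by φ[1] = p ∧ X p and φ[m+1] = p ∧ X φ[m], has until rank k+1 and is not equivalent to any MTL formula of until rank at most k. -/

import Mathlib

/-- Integers extended with `-∞` (`⊥`) and `+∞` (`⊤`), used as interval endpoints. -/
abbrev MTLEInt := WithBot (WithTop ℤ)

def MTLEInt.ofInt (n : ℤ) : MTLEInt := ((n : WithTop ℤ) : MTLEInt)

/-- An interval of integers, given by two (possibly infinite) endpoints and
openness flags. -/
structure Iv where
  lo : MTLEInt
  hi : MTLEInt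
  loOpen : Bool
  hiOpen : Bool

/-- Membership of an integer in an interval. -/
def Iv.mem (I : Iv) (d : ℤ) : Prop :=
  (if I.loOpen then I.lo < MTLEInt.ofInt d else I.lo ≤ MTLEInt.ofInt d) ∧
  (if I.hiOpen then MTLEInt.ofInt d < I.hi else MTLEInt.ofInt d ≤ I.hi)

/-- The interval `(-∞, +∞)`. -/
def Iv.univ : Iv := ⟨⊥, ⊤, true, true⟩

/-- The singleton interval `[n, n]`. -/
def Iv.pt (n : ℤ) : Iv := ⟨MTLEInt.ofInt n, MTLEInt.ofInt n, false, false⟩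

/-- A data word: an infinite sequence of pairs of a set of propositions and a
natural number data value. -/
abbrev DataWord (P : Type) := ℕ → (Set P) × ℕ

/-- Syntax of MTL: atoms, negation, conjunction, and interval-constrained
strict until. -/
inductive MTL (P : Type) where
  | atom : P → MTL P
  | neg  : MTL P → MTL P
  | and  : MTL P → MTL P → MTL P
  | untl : MTL P → Iv → MTL P → MTL P

/-- Satisfaction of an MTL formula at position `i` of data word `w`. -/
def MTL.sat {P : Type} (w : DataWord P) : ℕ → MTL P → Prop
  | i, .atom p => p ∈ (w i).1
  | i, .neg φ => ¬ MTL.sat w i φ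
  | i, .and φ ψ => MTL.sat w i φ ∧ MTL.sat w i ψ
  | i, .untl φ I ψ => ∃ j, i < j ∧ MTL.sat w j ψ ∧
      I.mem (((w j).2 : ℤ) - ((w i).2 : ℤ)) ∧
      ∀ k, i < k → k < j → MTL.sat w k φ

/-- A data word satisfies an MTL formula if it holds at position `0`. -/
def MTL.models {P : Type} (w : DataWord P) (φ : MTL P) : Prop := MTL.sat w 0 φ

/-- The until rank of an MTL formula. -/
def MTL.urk {P : Type} : MTL P → ℕ
  | .atom _ => 0
  | .neg φ => φ.urk
  | .and φ ψ => max φ.urk ψ.urk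
  | .untl φ _ ψ => max φ.urk ψ.urk + 1

/-- All interval endpoints of until operators in the formula lie in `S`. -/
def MTL.endpointsIn {P : Type} : MTL P → Set MTLEInt → Prop
  | .atom _, _ => True
  | .neg φ, S => φ.endpointsIn S
  | .and φ ψ, S => φ.endpointsIn S ∧ ψ.endpointsIn S
  | .untl φ I ψ, S => I.lo ∈ S ∧ I.hi ∈ S ∧ φ.endpointsIn S ∧ ψ.endpointsIn S

/-- An MTL falsity constant over `Bool`. -/
def mff : MTL Bool := .and (.atom true) (.neg (.atom true))

/-- The next operator `X φ := false U φ`. -/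
def mX (φ : MTL Bool) : MTL Bool := .untl mff Iv.univ φ

/-- `phiU k` is the formula `φ[k+1]`: `φ[1] = p ∧ X p`,
`φ[m+1] = p ∧ X φ[m]`, with `p` the atom `true`. -/
def phiU : ℕ → MTL Bool
  | 0 => .and (.atom true) (mX (.atom true))
  | m + 1 => .and (.atom true) (mX (phiU m))

/-!
Let `blockWord t` be the data word in which every proposition holds exactly at the positions
`< t` and every data value is `0`. Then `φ[k+1]` holds on `blockWord t` iff `t ≥ k + 2`, whereas
a formula of until rank `r` cannot tell `blockWord t` from `blockWord (t + 1)` once `t ≥ r + 1`: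
satisfaction at position `i` only depends on the number `t - i` of remaining `p`-positions, and an
until of rank `r + 1` can absorb the extra position by moving its witness by one.
-/

lemma Iv.mem_univ (d : ℤ) : Iv.univ.mem d :=
  ⟨WithBot.bot_lt_coe _, WithBot.coe_lt_coe.mpr (WithTop.coe_lt_top d)⟩

namespace MTL

lemma not_sat_mff (w : DataWord Bool) (i : ℕ) : ¬ sat w i mff :=
  fun h => h.2 h.1

lemma sat_mX (w : DataWord Bool) (i : ℕ) (φ : MTL Bool) :
    sat w i (mX φ) ↔ sat w (i + 1) φ := by
  constructor
  · rintro ⟨j, hij, hφ, -, hmid⟩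
    obtain rfl : j = i + 1 := by
      by_contra hne
      exact not_sat_mff w (i + 1) (hmid (i + 1) (by omega) (by omega))
    exact hφ
  · intro h
    exact ⟨i + 1, by omega, h, Iv.mem_univ _, fun k hk hk' => absurd hk' (by omega)⟩

lemma sat_shift {P : Type} (w : DataWord P) (d : ℕ) (ψ : MTL P) (i : ℕ) :
    sat (fun n => w (d + n)) i ψ ↔ sat w (d + i) ψ := by
  induction ψ generalizing i with
  | atom p => exact Iff.rfl
  | neg φ ih => exact not_congr (ih i)
  | and φ χ ihφ ihχ => exact and_congr (ihφ i) (ihχ i)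
  | untl φ I χ ihφ ihχ =>
    constructor
    · rintro ⟨j, hij, hχ, hI, hφ⟩
      refine ⟨d + j, by omega, (ihχ j).mp hχ, hI, fun k hk hk' => ?_⟩
      obtain ⟨m, rfl⟩ : ∃ m, k = d + m := ⟨k - d, by omega⟩
      exact (ihφ m).mp (hφ m (by omega) (by omega))
    · rintro ⟨j, hij, hχ, hI, hφ⟩
      obtain ⟨m, rfl⟩ : ∃ m, j = d + m := ⟨j - d, by omega⟩
      exact ⟨m, by omega, (ihχ m).mpr hχ, hI,
        fun k hk hk' => (ihφ k).mpr (hφ (d + k) (by omega) (by omega))⟩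

end MTL

def StableFrom (r : ℕ) (a : ℕ → Prop) : Prop :=
  ∀ n, r ≤ n → (a n ↔ a (n + 1))

namespace StableFrom

variable {r : ℕ} {a b : ℕ → Prop}

lemma mono {r' : ℕ} (h : StableFrom r a) (hr : r ≤ r') : StableFrom r' a :=
  fun n hn => h n (hr.trans hn)

lemma iff_of_le (h : StableFrom r a) {m : ℕ} (hm : r ≤ m) : ∀ n, m ≤ n → (a m ↔ a n) := by
  intro n hn
  induction n, hn using Nat.le_induction with
  | base => rfl
  | succ n hmn ih => exact ih.trans (h n (hm.trans hmn))

lemma iff (h : StableFrom r a) {m n : ℕ} (hm : r ≤ m) (hn : r ≤ n) : a m ↔ a n := by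
  rcases le_total m n with hmn | hnm
  · exact h.iff_of_le hm n hmn
  · exact (h.iff_of_le hn m hnm).symm

lemma not (h : StableFrom r a) : StableFrom r (fun n => ¬ a n) :=
  fun n hn => not_congr (h n hn)

lemma and (ha : StableFrom r a) (hb : StableFrom r b) : StableFrom r (fun n => a n ∧ b n) :=
  fun n hn => and_congr (ha n hn) (hb n hn)

end StableFrom

/-- `untl` on `blockWord t`, seen through the numbers `t - j` of block positions left after `j`. -/
def untilDown (a b : ℕ → Prop) (t : ℕ) : Prop :=
  ∃ j, 0 < j ∧ b (t - j) ∧ ∀ k, 0 < k → k < j → a (t - k)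

lemma untilDown_succ_of_untilDown {r : ℕ} {a b : ℕ → Prop} (ha : StableFrom (r + 1) a)
    (hb : StableFrom (r + 1) b) {t : ℕ} (ht : r + 2 ≤ t) (h : untilDown a b t) :
    untilDown a b (t + 1) := by
  obtain ⟨j, hj, hbj, hak⟩ := h
  by_cases hfar : r + 1 ≤ t - j
  · refine ⟨j, hj, (hb.iff hfar (by omega)).mp hbj, fun k hk hkj => ?_⟩
    exact (ha.iff (by omega) (by omega)).mp (hak k hk hkj)
  · -- the witness is near the end of the block: delay it by one position
    refine ⟨j + 1, by omega, by rwa [show t + 1 - (j + 1) = t - j by omega], fun k hk hkj => ?_⟩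
    rcases Nat.lt_or_ge k 2 with hk1 | hk2
    · rw [show t + 1 - k = t by omega]
      exact (ha.iff (m := t - 1) (by omega) (by omega)).mp (hak 1 Nat.one_pos (by omega))
    · rw [show t + 1 - k = t - (k - 1) by omega]
      exact hak (k - 1) (by omega) (by omega)

lemma untilDown_of_untilDown_succ {r : ℕ} {a b : ℕ → Prop} (ha : StableFrom (r + 1) a)
    (hb : StableFrom (r + 1) b) {t : ℕ} (ht : r + 2 ≤ t) (h : untilDown a b (t + 1)) :
    untilDown a b t := by
  obtain ⟨j, hj, hbj, hak⟩ := h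
  by_cases hfar : r + 1 ≤ t - j
  · refine ⟨j, hj, (hb.iff (by omega) hfar).mp hbj, fun k hk hkj => ?_⟩
    exact (ha.iff (by omega) (by omega)).mp (hak k hk hkj)
  · refine ⟨j - 1, by omega, by rwa [show t - (j - 1) = t + 1 - j by omega], fun k hk hkj => ?_⟩
    rw [show t - k = t + 1 - (k + 1) by omega]
    exact hak (k + 1) (by omega) (by omega)

lemma StableFrom.untilDown {r : ℕ} {a b : ℕ → Prop} (ha : StableFrom (r + 1) a)
    (hb : StableFrom (r + 1) b) : StableFrom (r + 2) (untilDown a b) :=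
  fun _ ht => ⟨untilDown_succ_of_untilDown ha hb ht, untilDown_of_untilDown_succ ha hb ht⟩

def blockWord {P : Type} (t : ℕ) : DataWord P :=
  fun i => (if i < t then Set.univ else ∅, 0)

namespace MTL

variable {P : Type}

lemma sat_blockWord_atom (t i : ℕ) (p : P) : sat (blockWord t) i (atom p) ↔ i < t := by
  by_cases h : i < t <;> simp [sat, blockWord, h]

lemma sat_blockWord (t i : ℕ) (ψ : MTL P) :
    sat (blockWord t) i ψ ↔ sat (blockWord (t - i)) 0 ψ := by
  have hshift : (fun n => (blockWord t : DataWord P) (i + n)) = blockWord (t - i) := by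
    funext n
    simp only [blockWord, show i + n < t ↔ n < t - i by omega]
  rw [← hshift, sat_shift, add_zero]

lemma sat_blockWord_untl (t : ℕ) (φ χ : MTL P) (I : Iv) :
    sat (blockWord t) 0 (untl φ I χ) ↔
      I.mem 0 ∧ untilDown (fun n => sat (blockWord n) 0 φ) (fun n => sat (blockWord n) 0 χ) t := by
  simp only [sat, untilDown, sat_blockWord t _ φ, sat_blockWord t _ χ, blockWord, sub_self]
  constructor
  · rintro ⟨j, hj, hχ, hI, hφ⟩
    exact ⟨hI, j, hj, hχ, hφ⟩
  · rintro ⟨hI, j, hj, hχ, hφ⟩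
    exact ⟨j, hj, hχ, hI, hφ⟩

lemma stableFrom_sat_blockWord (ψ : MTL P) :
    StableFrom (ψ.urk + 1) (fun t => sat (blockWord t) 0 ψ) := by
  induction ψ with
  | atom p =>
    intro n hn
    simp only [sat_blockWord_atom]
    omega
  | neg φ ih => exact ih.not
  | and φ χ ihφ ihχ =>
    exact (ihφ.mono (by simp [urk])).and (ihχ.mono (by simp [urk]))
  | untl φ I χ ihφ ihχ =>
    intro n hn
    simp only [sat_blockWord_untl]
    refine and_congr Iff.rfl ((StableFrom.untilDown (r := max φ.urk χ.urk) ?_ ?_) n hn)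
    · exact ihφ.mono (by omega)
    · exact ihχ.mono (by omega)

end MTL

lemma urk_phiU (k : ℕ) : (phiU k).urk = k + 1 := by
  induction k with
  | zero => simp [phiU, mX, mff, MTL.urk]
  | succ m ih => simp [phiU, mX, mff, MTL.urk, ih]

lemma sat_blockWord_phiU (k t : ℕ) : MTL.sat (blockWord t) 0 (phiU k) ↔ k + 2 ≤ t := by
  induction k generalizing t with
  | zero =>
    simp only [phiU, MTL.sat.eq_3, MTL.sat_mX, MTL.sat_blockWord_atom]
    omega
  | succ m ih =>
    simp only [phiU, MTL.sat.eq_3, MTL.sat_mX, MTL.sat_blockWord_atom]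
    rw [MTL.sat_blockWord, ih]
    omega

/-- The until hierarchy of MTL is strict: `φ[k+1]` has until rank `k+1` and
is not equivalent to any MTL formula of until rank at most `k`. -/
theorem mtl_until_hierarchy (k : ℕ) :
    MTL.urk (phiU k) = k + 1 ∧
    ¬ ∃ ψ : MTL Bool, MTL.urk ψ ≤ k ∧
        ∀ w : DataWord Bool, MTL.models w ψ ↔ MTL.models w (phiU k) := by
  refine ⟨urk_phiU k, ?_⟩
  rintro ⟨ψ, hrk, hequiv⟩
  have hstutter := MTL.stableFrom_sat_blockWord ψ (k + 1) (by omega)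
  have hshort := hequiv (blockWord (k + 1))
  have hlong := hequiv (blockWord (k + 2))
  simp only [MTL.models, sat_blockWord_phiU] at hshort hlong
  exact absurd (hshort.mp (hstutter.mpr (hlong.mpr le_rfl))) (by omega)
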